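/- arXiv:2408.05969 — 2 statements merged into one kernel-verified Lean document; each statement's English description precedes it below -/
import Mathlib

section
/- The arithmetic identity μ(n)·(log n)² = (μ⋆Λ⋆Λ)(n) − (μ⋆(Λ·L))(n) holds for all positive integers n, where L(n) = log n and ⋆ denotes Dirichlet convolution. -/
open Finset Real ArithmeticFunction ArithmeticFunction.Moebius

/-- Dirichlet convolution `Λ ⋆ Λ`. -/
noncomputable def LamLam (k : ℕ) : ℝ :=
  ∑ d ∈ k.divisors, Λ d * Λ (k / d)

/-!
Pointwise multiplication by `log` is a derivation `D` of the ring of arithmetic functions under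
Dirichlet convolution (the counterpart of `-d/ds` on Dirichlet series). Differentiating
`μ ⋆ ζ = 1`, with `D ζ = log = Λ ⋆ ζ`, gives `D μ = -(μ ⋆ Λ)`; differentiating once more gives
`D² μ = μ ⋆ Λ ⋆ Λ - μ ⋆ D Λ`, which evaluated at `n` is the identity.
-/

namespace ArithmeticFunction

open scoped zeta

theorem mul_apply_eq_sum_divisors {R : Type*} [Semiring R] (f g : ArithmeticFunction R) (n : ℕ) :
    (f * g) n = ∑ d ∈ n.divisors, f d * g (n / d) :=
  mul_apply.trans (Nat.sum_divisorsAntidiagonal fun a b => f a * g b)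

theorem neg_pmul {R : Type*} [Ring R] (f g : ArithmeticFunction R) :
    (-f).pmul g = -f.pmul g := by
  ext n
  simp only [pmul_apply, neg_apply, neg_mul]

theorem one_pmul_of_map_one_eq_zero {R : Type*} [Semiring R] {f : ArithmeticFunction R}
    (hf : f 1 = 0) : (1 : ArithmeticFunction R).pmul f = 0 := by
  ext n
  rcases eq_or_ne n 1 with rfl | hn
  · simp [hf]
  · simp [one_apply_ne hn]

theorem pmul_log_mul (f g : ArithmeticFunction ℝ) :
    (f * g).pmul log = f.pmul log * g + f * g.pmul log := by
  ext n
  simp only [pmul_apply, mul_apply, log_apply, add_apply, ← sum_add_distrib, sum_mul]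
  refine sum_congr rfl fun p hp => ?_
  obtain ⟨hp₁, hp₂⟩ := Nat.ne_zero_of_mem_divisorsAntidiagonal hp
  rw [← (Nat.mem_divisorsAntidiagonal.mp hp).1, Nat.cast_mul,
    Real.log_mul (Nat.cast_ne_zero.mpr hp₁) (Nat.cast_ne_zero.mpr hp₂)]
  ring

theorem moebius_pmul_log : (μ : ArithmeticFunction ℝ).pmul log = -(μ * Λ) := by
  have hD : ((μ : ArithmeticFunction ℝ).pmul log + μ * Λ) * ζ = 0 :=
    calc ((μ : ArithmeticFunction ℝ).pmul log + μ * Λ) * ζ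
        = (μ : ArithmeticFunction ℝ).pmul log * ζ + μ * (ζ : ArithmeticFunction ℝ).pmul log := by
          rw [add_mul, mul_assoc, vonMangoldt_mul_zeta, zeta_pmul]
      _ = (1 : ArithmeticFunction ℝ).pmul log := by
          rw [← pmul_log_mul, coe_moebius_mul_coe_zeta]
      _ = 0 := one_pmul_of_map_one_eq_zero (by simp)
  refine eq_neg_of_add_eq_zero_left ?_
  rw [← mul_one ((μ : ArithmeticFunction ℝ).pmul log + μ * Λ), ← coe_zeta_mul_coe_moebius,
    ← mul_assoc, hD, zero_mul]

theorem moebius_pmul_log_pmul_log :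
    ((μ : ArithmeticFunction ℝ).pmul log).pmul log + μ * pmul Λ log = μ * (Λ * Λ) := by
  rw [moebius_pmul_log, neg_pmul, pmul_log_mul, moebius_pmul_log]
  ring

end ArithmeticFunction

theorem stmt1_general (n : ℕ) :
    (μ n : ℝ) * (Real.log n) ^ 2
      = (∑ d ∈ n.divisors, (μ d : ℝ) * LamLam (n / d))
        - ∑ d ∈ n.divisors, (μ d : ℝ) * (Λ (n / d) * Real.log (n / d : ℕ)) := by
  have h := congrArg (· n) moebius_pmul_log_pmul_log
  simp only [ArithmeticFunction.add_apply, pmul_apply, log_apply, mul_apply_eq_sum_divisors,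
    intCoe_apply] at h
  rw [mul_assoc, ← sq] at h
  unfold LamLam
  exact eq_sub_of_add_eq h

/-- `μ(n)·(log n)² = (μ⋆Λ⋆Λ)(n) − (μ⋆(Λ·L))(n)` for positive integers `n`. -/
theorem stmt1 (n : ℕ) (hn : 0 < n) :
    (μ n : ℝ) * (Real.log n) ^ 2
      = (∑ d ∈ n.divisors, (μ d : ℝ) * LamLam (n / d))
        - ∑ d ∈ n.divisors, (μ d : ℝ) * (Λ (n / d) * Real.log (n / d : ℕ)) :=
  stmt1_general n
end

section
/- For every real X > 0, |R₂*(X)| ≤ 1 + 2γ + R₃(X) + 2|R₄(X)|, where R₂*(X) = ∑_{n ≤ X}(Λ⋆Λ(n) − Λ(n)·log n + 2γ), R₃(X) = 2√X·|√X·r(√X) − R(√X)| + R(√X)² + |R(X)|·log X + |∫₁^X R(t)/t dt|, and R₄(X) = ∑_{n ≤ √X} Λ(n)·R(X/n). -/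
open Finset Real ArithmeticFunction

noncomputable def psi (X : ℝ) : ℝ := ∑ n ∈ Finset.Icc 1 ⌊X⌋₊, Λ n

noncomputable def psiTilde (X : ℝ) : ℝ := ∑ n ∈ Finset.Icc 1 ⌊X⌋₊, Λ n / n

noncomputable def Rf (X : ℝ) : ℝ := psi X - X

noncomputable def rf (X : ℝ) : ℝ :=
  psiTilde X - Real.log X + Real.eulerMascheroniConstant

noncomputable def R2star (X : ℝ) : ℝ :=
  ∑ n ∈ Finset.Icc 1 ⌊X⌋₊,
    (LamLam n - Λ n * Real.log n + 2 * Real.eulerMascheroniConstant)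

noncomputable def R3 (X : ℝ) : ℝ :=
  2 * Real.sqrt X * |Real.sqrt X * rf (Real.sqrt X) - Rf (Real.sqrt X)|
    + Rf (Real.sqrt X) ^ 2 + |Rf X| * Real.log X + |∫ t in (1:ℝ)..X, Rf t / t|

noncomputable def R4 (X : ℝ) : ℝ :=
  ∑ n ∈ Finset.Icc 1 ⌊Real.sqrt X⌋₊, Λ n * Rf (X / n)

/-!
Dirichlet's hyperbola method at `√X` gives `∑_{n ≤ X} Λ⋆Λ(n) + ψ(√X)² = 2 ∑_{a ≤ √X} Λ(a) ψ(X/a)`,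
and writing `ψ(X/a) = X/a + R(X/a)` turns the right side into `2X ψ̃(√X) + 2 R₄(X)`. Abel summation
gives `∑_{n ≤ X} Λ(n) log n = ψ(X) log X − (X − 1) − ∫₁^X R(t)/t dt`. After substituting
`ψ̃(√X) = log √X − γ + r(√X)` and `ψ = id + R`, the main terms `X log X` and `X` cancel exactly, so
`R₂*(X)` is the sum of `2γ(⌊X⌋ − X) − 1`, `2R₄(X)` and terms bounded by those of `R₃(X)`. For `X < 1` the sum `R₂*(X)` is empty and
`R₃(X) ≥ |X| log |X| ≥ −1`.
-/

open MeasureTheory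

namespace ArithmeticFunction

variable {R : Type*} [Semiring R]

theorem mem_filter_mul_le_iff {N : ℕ} {x : ℕ × ℕ} :
    x ∈ {x ∈ Ioc 0 N ×ˢ Ioc 0 N | x.1 * x.2 ≤ N} ↔ 0 < x.1 ∧ 0 < x.2 ∧ x.1 * x.2 ≤ N := by
  simp only [mem_filter, mem_product, mem_Ioc]
  constructor
  · rintro ⟨⟨⟨h1, -⟩, h2, -⟩, h⟩
    exact ⟨h1, h2, h⟩
  · rintro ⟨h1, h2, h⟩
    exact ⟨⟨⟨h1, (Nat.le_mul_of_pos_right _ h2).trans h⟩, h2,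
      (Nat.le_mul_of_pos_left _ h1).trans h⟩, h⟩

/-- Dirichlet's hyperbola method, splitting at `√N`. -/
theorem sum_Ioc_mul_add_sum_mul_sum_eq (f g : ArithmeticFunction R) (N : ℕ) :
    ∑ n ∈ Ioc 0 N, (f * g) n + (∑ a ∈ Ioc 0 N.sqrt, f a) * ∑ b ∈ Ioc 0 N.sqrt, g b =
      ∑ a ∈ Ioc 0 N.sqrt, f a * ∑ b ∈ Ioc 0 (N / a), g b +
        ∑ b ∈ Ioc 0 N.sqrt, (∑ a ∈ Ioc 0 (N / b), f a) * g b := by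
  set P := {x ∈ Ioc 0 N ×ˢ Ioc 0 N | x.1 * x.2 ≤ N}
  set M := N.sqrt
  have memP (x : ℕ × ℕ) : x ∈ P ↔ 0 < x.1 ∧ 0 < x.2 ∧ x.1 * x.2 ≤ N := mem_filter_mul_le_iff
  have hunion : {x ∈ P | x.1 ≤ M} ∪ {x ∈ P | x.2 ≤ M} = P := by
    rw [← filter_or, filter_true_of_mem]
    intro x hx
    by_contra! h
    have hN : N < (M + 1) * (M + 1) := Nat.lt_succ_sqrt N
    have hx := ((memP x).mp hx).2.2
    nlinarith [Nat.mul_le_mul h.1 h.2]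
  have hinter : {x ∈ P | x.1 ≤ M} ∩ {x ∈ P | x.2 ≤ M} = Ioc 0 M ×ˢ Ioc 0 M := by
    ext x
    simp only [← filter_and, mem_filter, memP, mem_product, mem_Ioc]
    have hM : M * M ≤ N := Nat.sqrt_le N
    constructor
    · rintro ⟨⟨h1, h2, -⟩, h1M, h2M⟩
      exact ⟨⟨h1, h1M⟩, h2, h2M⟩
    · rintro ⟨⟨h1, h1M⟩, h2, h2M⟩
      exact ⟨⟨h1, h2, (Nat.mul_le_mul h1M h2M).trans hM⟩, h1M, h2M⟩
  have hfst : ∑ x ∈ P with x.1 ≤ M, f x.1 * g x.2 =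
      ∑ a ∈ Ioc 0 M, f a * ∑ b ∈ Ioc 0 (N / a), g b := by
    simp_rw [mul_sum]
    refine sum_finset_product _ _ _ fun x ↦ ?_
    simp only [mem_filter, memP, mem_Ioc]
    constructor
    · rintro ⟨⟨h1, h2, h⟩, hM⟩
      exact ⟨⟨h1, hM⟩, h2, (Nat.le_div_iff_mul_le h1).mpr (by rwa [mul_comm])⟩
    · rintro ⟨⟨h1, hM⟩, h2, h⟩
      exact ⟨⟨h1, h2, mul_comm x.2 x.1 ▸ (Nat.le_div_iff_mul_le h1).mp h⟩, hM⟩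
  have hsnd : ∑ x ∈ P with x.2 ≤ M, f x.1 * g x.2 =
      ∑ b ∈ Ioc 0 M, (∑ a ∈ Ioc 0 (N / b), f a) * g b := by
    simp_rw [sum_mul]
    refine sum_finset_product_right _ _ _ fun x ↦ ?_
    simp only [mem_filter, memP, mem_Ioc]
    constructor
    · rintro ⟨⟨h1, h2, h⟩, hM⟩
      exact ⟨⟨h2, hM⟩, h1, (Nat.le_div_iff_mul_le h2).mpr h⟩
    · rintro ⟨⟨h2, hM⟩, h1, h⟩
      exact ⟨⟨h1, h2, (Nat.le_div_iff_mul_le h2).mp h⟩, hM⟩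
  have hsplit := sum_union_inter (s₁ := {x ∈ P | x.1 ≤ M}) (s₂ := {x ∈ P | x.2 ≤ M})
    (f := fun x ↦ f x.1 * g x.2)
  rw [hunion, hinter, hfst, hsnd, sum_product] at hsplit
  rw [sum_Ioc_mul_eq_sum_prod_filter, sum_mul_sum, hsplit]

end ArithmeticFunction

theorem Real.nat_floor_sqrt_eq_nat_sqrt_floor {X : ℝ} (hX : 0 ≤ X) : ⌊√X⌋₊ = Nat.sqrt ⌊X⌋₊ := by
  rw [Nat.floor_eq_iff (sqrt_nonneg X)]
  constructor
  · exact nat_sqrt_le_real_sqrt.trans (sqrt_le_sqrt (Nat.floor_le hX))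
  · rw [sqrt_lt' (by positivity : (0 : ℝ) < _)]
    calc X < ⌊X⌋₊ + 1 := Nat.lt_floor_add_one X
      _ ≤ (Nat.sqrt ⌊X⌋₊ + 1 : ℕ) ^ 2 := by
        exact_mod_cast (Nat.lt_succ_sqrt' ⌊X⌋₊)
      _ = _ := by push_cast; ring

theorem psi_eq_chebyshevPsi (X : ℝ) : psi X = Chebyshev.psi X := by
  rw [psi, Chebyshev.psi, ← Icc_add_one_left_eq_Ioc, zero_add]

theorem LamLam_eq_mul_apply (n : ℕ) : LamLam n = (Λ * Λ) n := by
  rw [LamLam, mul_apply, Nat.sum_divisorsAntidiagonal (fun a b ↦ Λ a * Λ b)]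

theorem sum_LamLam_add_psi_sqrt_sq {X : ℝ} (hX : 0 ≤ X) :
    ∑ n ∈ Icc 1 ⌊X⌋₊, LamLam n + psi √X ^ 2 = 2 * ∑ a ∈ Icc 1 ⌊√X⌋₊, Λ a * psi (X / a) := by
  have hyp := sum_Ioc_mul_add_sum_mul_sum_eq Λ Λ ⌊X⌋₊
  simp only [psi_eq_chebyshevPsi, Chebyshev.psi, Nat.floor_div_natCast, ← Icc_add_one_left_eq_Ioc,
    zero_add, Real.nat_floor_sqrt_eq_nat_sqrt_floor hX, LamLam_eq_mul_apply] at hyp ⊢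
  rw [sq, hyp, two_mul]
  congr 1
  exact sum_congr rfl fun _ _ ↦ mul_comm _ _

theorem intervalIntegrable_psi_div {X : ℝ} (hX : 1 ≤ X) :
    IntervalIntegrable (fun t ↦ psi t / t) volume 1 X := by
  rw [intervalIntegrable_iff_integrableOn_Icc_of_le hX]
  have hinv : IntegrableOn (fun t : ℝ ↦ t⁻¹) (Set.Icc 1 X) :=
    ContinuousOn.integrableOn_Icc fun t ht ↦
      (continuousAt_inv₀ (by linarith [ht.1])).continuousWithinAt
  simpa only [psi_eq_chebyshevPsi, Chebyshev.psi_eq_sum_Icc, div_eq_inv_mul] using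
    integrableOn_mul_sum_Icc (fun n ↦ Λ n) zero_le_one hinv (m := 0)

theorem integral_Rf_div {X : ℝ} (hX : 1 ≤ X) :
    ∫ t in 1..X, Rf t / t = (∫ t in 1..X, psi t / t) - (X - 1) := by
  have hEq : Set.EqOn (fun t ↦ Rf t / t) (fun t ↦ psi t / t - 1) (Set.uIcc 1 X) := by
    intro t ht
    rw [Set.uIcc_of_le hX] at ht
    have : t ≠ 0 := by linarith [ht.1]
    simp only [Rf]
    field_simp
  rw [intervalIntegral.integral_congr hEq,
    intervalIntegral.integral_sub (intervalIntegrable_psi_div hX) intervalIntegrable_const,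
    intervalIntegral.integral_const, smul_eq_mul, mul_one]

theorem sum_vonMangoldt_mul_log {X : ℝ} (hX : 1 ≤ X) :
    ∑ n ∈ Icc 1 ⌊X⌋₊, Λ n * Real.log n = psi X * Real.log X - (X - 1) - ∫ t in 1..X, Rf t / t := by
  have hdiff : ∀ t ∈ Set.Icc 1 X, DifferentiableAt ℝ Real.log t := fun t ht ↦
    differentiableAt_log (by linarith [ht.1])
  have hderiv : IntegrableOn (deriv Real.log) (Set.Icc 1 X) := by
    rw [deriv_log']
    exact ContinuousOn.integrableOn_Icc fun t ht ↦
      (continuousAt_inv₀ (by linarith [ht.1])).continuousWithinAt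
  have abel := sum_mul_eq_sub_integral_mul₀ (fun n ↦ Λ n) (by simp) X hdiff hderiv
  simp only [deriv_log', ← Chebyshev.psi_eq_sum_Icc, ← psi_eq_chebyshevPsi] at abel
  rw [integral_Rf_div hX, intervalIntegral.integral_of_le hX]
  rw [← add_sum_Ioc_eq_sum_Icc (Nat.zero_le _), ← Icc_add_one_left_eq_Ioc] at abel
  simp only [Nat.cast_zero, Real.log_zero, zero_mul, zero_add, mul_comm (Real.log _)] at abel
  simp only [div_eq_inv_mul]
  linarith

theorem R2star_eq {X : ℝ} (hX : 1 ≤ X) :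
    R2star X = 2 * eulerMascheroniConstant * (⌊X⌋₊ - X) - 1
      + 2 * √X * (√X * rf √X - Rf √X) - Rf √X ^ 2 - Rf X * Real.log X
      + (∫ t in 1..X, Rf t / t) + 2 * R4 X := by
  have hX0 : 0 ≤ X := by linarith
  have hsplit : R2star X = ∑ n ∈ Icc 1 ⌊X⌋₊, LamLam n - ∑ n ∈ Icc 1 ⌊X⌋₊, Λ n * Real.log n
      + ⌊X⌋₊ * (2 * eulerMascheroniConstant) := by
    rw [R2star, sum_add_distrib, sum_sub_distrib, sum_const, Nat.card_Icc, Nat.add_sub_cancel,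
      nsmul_eq_mul]
  have hR4 : ∑ a ∈ Icc 1 ⌊√X⌋₊, Λ a * psi (X / a) = X * psiTilde √X + R4 X := by
    rw [psiTilde, R4, mul_sum, ← sum_add_distrib]
    refine sum_congr rfl fun a _ ↦ ?_
    rw [Rf]
    ring
  have hrf : rf √X = psiTilde √X - Real.log X / 2 + eulerMascheroniConstant := by
    rw [rf, Real.log_sqrt hX0]
  have hsq : √X * √X = X := mul_self_sqrt hX0
  have hpsi (t : ℝ) : psi t = t + Rf t := by rw [Rf]; ring
  linear_combination hsplit + sum_LamLam_add_psi_sqrt_sq hX0 + 2 * hR4 - 2 * X * hrf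
    - sum_vonMangoldt_mul_log hX - (2 * rf √X + 1) * hsq
    - Real.log X * hpsi X - (psi √X + √X + Rf √X) * hpsi √X

theorem Real.eulerMascheroniConstant_nonneg : 0 ≤ eulerMascheroniConstant := by
  linarith [one_half_lt_eulerMascheroniConstant]

theorem abs_R2star_le_of_one_le {X : ℝ} (hX : 1 ≤ X) :
    |R2star X| ≤ 1 + 2 * eulerMascheroniConstant + R3 X + 2 * |R4 X| := by
  set D := √X * rf √X - Rf √X
  set I := ∫ t in 1..X, Rf t / t
  have hfloor : X - 1 < ⌊X⌋₊ ∧ (⌊X⌋₊ : ℝ) ≤ X :=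
    ⟨by linarith [Nat.lt_floor_add_one X], Nat.floor_le (by linarith)⟩
  have hγ : |2 * eulerMascheroniConstant * (⌊X⌋₊ - X) - 1| ≤ 1 + 2 * eulerMascheroniConstant := by
    have := eulerMascheroniConstant_nonneg
    rw [abs_le]
    constructor <;> nlinarith
  have hD : |2 * √X * D| = 2 * √X * |D| := by rw [abs_mul, abs_of_nonneg (by positivity)]
  have hlog : |Rf X * Real.log X| = |Rf X| * Real.log X := by
    rw [abs_mul, abs_of_nonneg (Real.log_nonneg hX)]
  rw [R2star_eq hX, R3, abs_le]
  constructor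
  · linarith [neg_abs_le (2 * eulerMascheroniConstant * (⌊X⌋₊ - X) - 1), neg_abs_le (2 * √X * D),
      le_abs_self (Rf X * Real.log X), neg_abs_le I, neg_abs_le (R4 X), sq_nonneg (Rf √X)]
  · linarith [le_abs_self (2 * eulerMascheroniConstant * (⌊X⌋₊ - X) - 1), le_abs_self (2 * √X * D),
      neg_abs_le (Rf X * Real.log X), le_abs_self I, le_abs_self (R4 X), sq_nonneg (Rf √X)]

theorem R2star_eq_zero_of_lt_one {X : ℝ} (hX : X < 1) : R2star X = 0 := by
  rw [R2star, Nat.floor_eq_zero.mpr hX, Icc_eq_empty (by norm_num), sum_empty]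

theorem neg_one_le_R3_of_lt_one {X : ℝ} (hX : X < 1) : -1 ≤ R3 X := by
  have hRf : |Rf X| * Real.log X = |X| * Real.log |X| := by
    rw [Rf, psi, Nat.floor_eq_zero.mpr hX, Icc_eq_empty (by norm_num), sum_empty, zero_sub,
      abs_neg, Real.log_abs]
  have hmul_log := self_sub_one_le_mul_log (abs_nonneg X)
  have hfirst : 0 ≤ 2 * √X * |√X * rf √X - Rf √X| := by positivity
  rw [R3, hRf]
  linarith [abs_nonneg X, sq_nonneg (Rf √X), abs_nonneg (∫ t in 1..X, Rf t / t)]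

theorem stmt5_general (X : ℝ) :
    |R2star X| ≤ 1 + 2 * Real.eulerMascheroniConstant + R3 X + 2 * |R4 X| := by
  rcases lt_or_ge X 1 with hX1 | hX1
  · rw [R2star_eq_zero_of_lt_one hX1, abs_zero]
    linarith [neg_one_le_R3_of_lt_one hX1, abs_nonneg (R4 X), eulerMascheroniConstant_nonneg]
  · exact abs_R2star_le_of_one_le hX1

theorem stmt5 (X : ℝ) (hX : 0 < X) :
    |R2star X| ≤ 1 + 2 * Real.eulerMascheroniConstant + R3 X + 2 * |R4 X| :=
  stmt5_general X
end
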